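/- arXiv:2211.07345 — 2 statements merged into one kernel-verified Lean document; each statement's English description precedes it below -/
import Mathlib

section
/- Let N ≥ 2 be an integer, let X_{ij} ∈ {0,1} be given for all ordered pairs of distinct indices i, j ∈ {1,…,N}, and let u_1, …, u_N be integers with u_1 = 1 and 2 ≤ u_i ≤ N for all i ≠ 1, satisfying u_i − u_j + N·X_{ij} ≤ N − 1 for all i ≠ 1, j ≠ 1 with i ≠ j. Then there is no closed sequence of nodes v_0, v_1, …, v_k (k ≥ 2, v_k = v_0, consecutive nodes distinct) with v_t ≠ 1 for all t and X_{v_t v_{t+1}} = 1 for all 0 ≤ t < k; that is, the arcs selected by X contain no directed cycle avoiding node 1. -/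
/-! On an arc `i → j` between nodes other than `1`, the MTZ constraint with `X i j = 1` reads
`u j ≥ u i + 1`, so the positions `u` strictly increase along a cycle avoiding `1`, which is
impossible once the cycle returns to its start. -/

theorem Int.add_le_of_forall_add_one_le {f : ℕ → ℤ} {k : ℕ}
    (h : ∀ t < k, f t + 1 ≤ f (t + 1)) : f 0 + k ≤ f k := by
  induction k with
  | zero => simp
  | succ n ih =>
    have hn := ih fun t ht => h t (Nat.lt_succ_of_lt ht)
    have hlast := h n (Nat.lt_succ_self n)
    push_cast
    linarith

theorem stmt_1_general (N : ℕ) (X : ℕ → ℕ → ℤ) (u : ℕ → ℤ)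
    (hmtz : ∀ i ∈ Finset.Icc 1 N, ∀ j ∈ Finset.Icc 1 N, i ≠ 1 → j ≠ 1 → i ≠ j →
      u i - u j + (N : ℤ) * X i j ≤ (N : ℤ) - 1) :
    ¬ ∃ (k : ℕ) (v : ℕ → ℕ), 2 ≤ k ∧
      (∀ t ≤ k, v t ∈ Finset.Icc 1 N) ∧
      v k = v 0 ∧
      (∀ t < k, v t ≠ v (t + 1)) ∧
      (∀ t ≤ k, v t ≠ 1) ∧
      (∀ t < k, X (v t) (v (t + 1)) = 1) := by
  rintro ⟨k, v, hk, hmem, hclosed, hne, hnot1, harc⟩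
  have hstep : ∀ t < k, u (v t) + 1 ≤ u (v (t + 1)) := by
    intro t ht
    have h := hmtz (v t) (hmem t ht.le) (v (t + 1)) (hmem (t + 1) ht)
      (hnot1 t ht.le) (hnot1 (t + 1) ht) (hne t ht)
    rw [harc t ht] at h
    linarith
  have hgain := Int.add_le_of_forall_add_one_le hstep
  rw [hclosed] at hgain
  omega

/-- The Miller–Tucker–Zemlin constraints eliminate every directed cycle
(among the arcs selected by `X`) that avoids the home node 1. -/
theorem stmt_1 (N : ℕ) (hN : 2 ≤ N) (X : ℕ → ℕ → ℤ) (u : ℕ → ℤ)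
    (hX : ∀ i ∈ Finset.Icc 1 N, ∀ j ∈ Finset.Icc 1 N, i ≠ j → X i j = 0 ∨ X i j = 1)
    (hu1 : u 1 = 1)
    (hul : ∀ i ∈ Finset.Icc 1 N, i ≠ 1 → 2 ≤ u i)
    (huu : ∀ i ∈ Finset.Icc 1 N, i ≠ 1 → u i ≤ (N : ℤ))
    (hmtz : ∀ i ∈ Finset.Icc 1 N, ∀ j ∈ Finset.Icc 1 N, i ≠ 1 → j ≠ 1 → i ≠ j →
      u i - u j + (N : ℤ) * X i j ≤ (N : ℤ) - 1) :
    ¬ ∃ (k : ℕ) (v : ℕ → ℕ), 2 ≤ k ∧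
      (∀ t ≤ k, v t ∈ Finset.Icc 1 N) ∧
      v k = v 0 ∧
      (∀ t < k, v t ≠ v (t + 1)) ∧
      (∀ t ≤ k, v t ≠ 1) ∧
      (∀ t < k, X (v t) (v (t + 1)) = 1) :=
  stmt_1_general N X u hmtz
end

section
/- Let N ≥ 2 be an integer and let X_{ij} ∈ {0,1} be given for all ordered pairs of distinct indices i, j ∈ {1,…,N} such that (entry constraints) for every j, Σ_{i ≠ j} X_{ij} = 1, (exit constraints) for every i, Σ_{j ≠ i} X_{ij} = 1, and there exist integers u_1, …, u_N with u_1 = 1, 2 ≤ u_i ≤ N for i ≠ 1, and u_i − u_j + N·X_{ij} ≤ N − 1 for all i ≠ 1, j ≠ 1, i ≠ j. Then the map σ sending each i to the unique j with X_{ij} = 1 is a permutation of {1,…,N} that is a single cycle of length N; that is, the arcs with X_{ij} = 1 form a Hamiltonian directed cycle visiting every node exactly once. -/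
/-!
The single-entry-single-exit constraints make the successor map `σ` injective on
`{1, …, N}`. On an arc `i → σ i` avoiding node `1` the MTZ constraint with `X i (σ i) = 1`
reads `u (σ i) ≥ u i + 1`, and off node `1` the potential `u` takes at most `N - 1` values,
so every orbit passes through node `1`. An injective self-map of a finite set under which
every point reaches a given point `a` is a single cycle: `a` is periodic, every point lies
on the orbit of `a`, and that orbit has exactly as many points as the set.
-/

open Finset Function

theorem Finset.existsUnique_eq_one_of_sum_eq_one {α : Type*} {s : Finset α} {f : α → ℤ}
    (hf : ∀ x ∈ s, f x = 0 ∨ f x = 1) (hsum : ∑ x ∈ s, f x = 1) :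
    ∃! x, x ∈ s ∧ f x = 1 := by
  classical
  obtain ⟨a, ha, hfa⟩ := exists_ne_zero_of_sum_ne_zero (hsum ▸ one_ne_zero)
  have hfa : f a = 1 := (hf a ha).resolve_left hfa
  refine ⟨a, ⟨ha, hfa⟩, fun b ⟨hb, hfb⟩ => by_contra fun hba => ?_⟩
  have hnonneg : ∀ x ∈ s.erase a, 0 ≤ f x := fun x hx => by
    rcases hf x (mem_of_mem_erase hx) with h | h <;> simp [h]
  have := single_le_sum hnonneg (mem_erase.mpr ⟨hba, hb⟩)
  rw [← add_sum_erase s f ha] at hsum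
  omega

section Potential

variable {α : Type*} {f : α → α} {s : Set α} {u : α → ℤ} {a : α}

theorem add_le_potential_iterate (hs : Set.MapsTo f s s)
    (hstep : ∀ x ∈ s, x ≠ a → f x ≠ a → u x + 1 ≤ u (f x)) {x : α} (hx : x ∈ s) :
    ∀ n : ℕ, (∀ t ≤ n, f^[t] x ≠ a) → u x + n ≤ u (f^[n] x)
  | 0, _ => by simp
  | n + 1, hne => by
    have ih := add_le_potential_iterate hs hstep hx n fun t ht => hne t (by omega)
    have hsucc := hstep _ (hs.iterate n hx) (hne n (by omega))
      (by simpa only [iterate_succ_apply'] using hne (n + 1) le_rfl)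
    rw [iterate_succ_apply']
    push_cast
    omega

theorem exists_iterate_eq_of_potential (hs : Set.MapsTo f s s)
    (hstep : ∀ x ∈ s, x ≠ a → f x ≠ a → u x + 1 ≤ u (f x)) {lo : ℤ} {n : ℕ}
    (hbound : ∀ x ∈ s, x ≠ a → lo ≤ u x ∧ u x < lo + n) {x : α} (hx : x ∈ s) :
    ∃ m, f^[m] x = a := by
  by_contra! hne
  have hchain := add_le_potential_iterate hs hstep hx n fun t _ => hne t
  have hx0 := hbound x hx (hne 0)
  have hxn := hbound _ (hs.iterate n hx) (hne n)
  omega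

end Potential

section Cycle

variable {α : Type*} {f : α → α} {s : Finset α} {a : α}

theorem exists_lt_minimalPeriod_iterate_eq (hmaps : Set.MapsTo f s s) (hinj : Set.InjOn f s)
    (ha : a ∈ s) (ha_periodic : a ∈ periodicPts f) {x : α} (hx : x ∈ s)
    (hreach : ∃ m, f^[m] x = a) : ∃ k < minimalPeriod f a, f^[k] a = x := by
  obtain ⟨m, hm⟩ := hreach
  have hp := minimalPeriod_pos_of_mem_periodicPts ha_periodic
  -- `f^[m]` is injective on `s` and sends both `x` and `f^[p * m - m] a`
  -- to `a`, where `p` is the minimal period of `a`.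
  have hback : f^[m] (f^[minimalPeriod f a * m - m] a) = f^[m] x := by
    rw [← iterate_add_apply, Nat.add_sub_cancel' (Nat.le_mul_of_pos_left m hp),
      ((isPeriodicPt_minimalPeriod f a).mul_const m).eq, hm]
  refine ⟨(minimalPeriod f a * m - m) % minimalPeriod f a, Nat.mod_lt _ hp, ?_⟩
  rw [iterate_mod_minimalPeriod_eq]
  exact hinj.iterate hmaps m (hmaps.iterate _ ha) hx hback

theorem minimalPeriod_eq_card_of_forall_exists_iterate_eq (hmaps : Set.MapsTo f s s)
    (hinj : Set.InjOn f s) (ha : a ∈ s) (hreach : ∀ x ∈ s, ∃ m, f^[m] x = a) {x : α}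
    (hx : x ∈ s) : minimalPeriod f x = #s := by
  classical
  have ha_periodic : a ∈ periodicPts f := by
    obtain ⟨m, hm⟩ := hreach (f a) (hmaps ha)
    exact mk_mem_periodicPts m.succ_pos (by rwa [IsPeriodicPt, IsFixedPt, iterate_succ_apply])
  have hcover (y) (hy : y ∈ s) :=
    exists_lt_minimalPeriod_iterate_eq hmaps hinj ha ha_periodic hy (hreach y hy)
  have horbit : (range (minimalPeriod f a)).image (f^[·] a) = s := by
    refine Finset.Subset.antisymm (fun y hy => ?_) fun y hy => ?_
    · obtain ⟨k, -, rfl⟩ := mem_image.mp hy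
      exact hmaps.iterate k ha
    · obtain ⟨k, hk, rfl⟩ := hcover y hy
      exact mem_image_of_mem _ (mem_range.mpr hk)
  obtain ⟨k, -, rfl⟩ := hcover x hx
  rw [minimalPeriod_apply_iterate ha_periodic, ← horbit,
    card_image_of_injOn (by simpa only [coe_range] using iterate_injOn_Iio_minimalPeriod),
    card_range]

end Cycle

theorem injOn_of_sum_erase_eq_one {α : Type*} [DecidableEq α] {s : Finset α}
    {X : α → α → ℤ} {σ : α → α} (hX : ∀ i ∈ s, ∀ j ∈ s, i ≠ j → X i j = 0 ∨ X i j = 1)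
    (hentry : ∀ j ∈ s, ∑ i ∈ s.erase j, X i j = 1)
    (hσ : ∀ i ∈ s, σ i ∈ s ∧ σ i ≠ i ∧ X i (σ i) = 1) : Set.InjOn σ s := by
  intro a ha b hb hab
  have hpred := existsUnique_eq_one_of_sum_eq_one (f := (X · (σ a)))
    (fun i hi => hX i (mem_of_mem_erase hi) _ (hσ a ha).1 (ne_of_mem_erase hi))
    (hentry _ (hσ a ha).1)
  exact hpred.unique ⟨mem_erase.mpr ⟨(hσ a ha).2.1.symm, ha⟩, (hσ a ha).2.2⟩
    ⟨mem_erase.mpr ⟨hab ▸ (hσ b hb).2.1.symm, hb⟩, hab ▸ (hσ b hb).2.2⟩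

/-- Under the single-entry-single-exit constraints together with the
Miller–Tucker–Zemlin subtour-elimination constraints, the selected arcs
form a single Hamiltonian directed cycle: the map sending each node `i`
to the unique `j` with `X i j = 1` is a permutation of `{1, …, N}` that
is a single cycle of length `N`. -/
theorem stmt_3 (N : ℕ) (hN : 2 ≤ N) (X : ℕ → ℕ → ℤ)
    (hX : ∀ i ∈ Finset.Icc 1 N, ∀ j ∈ Finset.Icc 1 N, i ≠ j → X i j = 0 ∨ X i j = 1)
    (hentry : ∀ j ∈ Finset.Icc 1 N, ∑ i ∈ (Finset.Icc 1 N).erase j, X i j = 1)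
    (hexit : ∀ i ∈ Finset.Icc 1 N, ∑ j ∈ (Finset.Icc 1 N).erase i, X i j = 1)
    (hmtz : ∃ u : ℕ → ℤ, u 1 = 1 ∧
      (∀ i ∈ Finset.Icc 1 N, i ≠ 1 → 2 ≤ u i ∧ u i ≤ (N : ℤ)) ∧
      (∀ i ∈ Finset.Icc 1 N, ∀ j ∈ Finset.Icc 1 N, i ≠ 1 → j ≠ 1 → i ≠ j →
        u i - u j + (N : ℤ) * X i j ≤ (N : ℤ) - 1)) :
    (∀ i ∈ Finset.Icc 1 N, ∃! j, j ∈ Finset.Icc 1 N ∧ j ≠ i ∧ X i j = 1) ∧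
    ∀ σ : ℕ → ℕ,
      (∀ i ∈ Finset.Icc 1 N, σ i ∈ Finset.Icc 1 N ∧ σ i ≠ i ∧ X i (σ i) = 1) →
      Set.BijOn σ (Set.Icc 1 N) (Set.Icc 1 N) ∧
      ∀ i ∈ Finset.Icc 1 N, σ^[N] i = i ∧ ∀ m, 0 < m → m < N → σ^[m] i ≠ i := by
  obtain ⟨u, -, hu_bound, hu_arc⟩ := hmtz
  have hsucc (i) (hi : i ∈ Icc 1 N) : ∃! j, j ∈ Icc 1 N ∧ j ≠ i ∧ X i j = 1 := by
    simpa only [mem_erase, and_comm (a := _ ≠ i), and_assoc] using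
      existsUnique_eq_one_of_sum_eq_one
        (fun j hj => hX i hi j (mem_of_mem_erase hj) (ne_of_mem_erase hj).symm) (hexit i hi)
  refine ⟨hsucc, fun σ hσ => ?_⟩
  have hmaps : Set.MapsTo σ (Icc 1 N : Finset ℕ) (Icc 1 N : Finset ℕ) :=
    fun i hi => (hσ i hi).1
  have hinj := injOn_of_sum_erase_eq_one hX hentry hσ
  have hstep (i) (hi : i ∈ (Icc 1 N : Finset ℕ)) (hi1 : i ≠ 1) (hσi1 : σ i ≠ 1) :
      u i + 1 ≤ u (σ i) := by
    have := hu_arc i hi (σ i) (hmaps hi) hi1 hσi1 (hσ i hi).2.1.symm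
    rw [(hσ i hi).2.2] at this
    linarith
  have hreach (i) (hi : i ∈ Icc 1 N) : ∃ m, σ^[m] i = 1 :=
    exists_iterate_eq_of_potential hmaps hstep (lo := 2) (n := N - 1)
      (fun x hx hx1 => by have := hu_bound x hx hx1; omega) hi
  have hperiod (i) (hi : i ∈ Icc 1 N) : minimalPeriod σ i = N := by
    rw [minimalPeriod_eq_card_of_forall_exists_iterate_eq hmaps hinj
      (mem_Icc.mpr ⟨le_rfl, by omega⟩) hreach hi, Nat.card_Icc, Nat.add_sub_cancel]
  refine ⟨?_, fun i hi => ⟨hperiod i hi ▸ iterate_minimalPeriod, fun m hm0 hmN => ?_⟩⟩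
  · rw [← coe_Icc]
    exact ((Icc 1 N).finite_toSet.injOn_iff_bijOn_of_mapsTo hmaps).mp hinj
  · exact not_isPeriodicPt_of_pos_of_lt_minimalPeriod hm0.ne' (hperiod i hi ▸ hmN)
end
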